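/- arXiv:1805.09211 — 2 statements merged into one kernel-verified Lean document; each statement's English description precedes it below -/
import Mathlib

section
/- Let d ≥ 4 be even and let i₀ be an integer with 1 ≤ i₀ ≤ d−2. Then there is no unit vector α ∈ ℂ^d such that ⟨α, X^{d/2} Z^i α⟩ = 0 for all i = 0, 1, …, d/2 and ⟨α, Z^i α⟩ = 0 for all integers i with i₀ ≤ i ≤ i₀ + d/2 − 1. (Equivalently: any set S of generalized Bell states whose pairwise difference set ΔU contains {(d/2, i)}_{i=0}^{d/2} ∪ {(0, i)}_{i=i₀}^{i₀+d/2−1} is 1-LOCC indistinguishable.) -/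
/-! The conditions with `X^{d/2}` say that the Fourier transform of the autocorrelation
`j ↦ conj (α (j + d/2)) * α j` vanishes at `0, …, d/2`. Since `d/2 + d/2 = 0`, shifting this
autocorrelation by `d/2` conjugates it, so its Fourier transform also vanishes at `-(d/2), …, 0`,
hence everywhere. Thus `α j` and `α (j + d/2)` are never both nonzero, and `α` has at most `d/2`
nonzero entries. The conditions with `Z^i` are the `d/2` consecutive moments
`∑ j, |α j|² ω^{i₀ j} (ω^j)^t = 0`, `t < d/2`, at the distinct nodes `ω^j`; Lagrange interpolation
then forces `α = 0`. -/

open Complex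

/-- `ω d = exp(2πi/d)`, the primitive `d`-th root of unity in `ℂ`. -/
noncomputable def ω (d : ℕ) : ℂ := Complex.exp (2 * Real.pi * Complex.I / d)

/-- The generalized Pauli operator `U_{m,n} = X^m Z^n` acting on `ℂ^d`
(coordinates indexed by `ZMod d`), where `X e_j = e_{j+1}` and `Z e_j = ω^j e_j`:
`(U_{m,n} α)_k = ω^{n (k-m)} α_{k-m}`. -/
noncomputable def pU (d : ℕ) [NeZero d] (m n : ZMod d) (α : ZMod d → ℂ) : ZMod d → ℂ :=
  fun k => ω d ^ (n.val * (k - m).val) * α (k - m)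

/-- The standard Hermitian inner product on `ℂ^d`. -/
noncomputable def ip (d : ℕ) [NeZero d] (α β : ZMod d → ℂ) : ℂ :=
  ∑ j : ZMod d, (starRingEnd ℂ) (α j) * β j

open Finset ZMod Polynomial
open scoped ComplexConjugate

theorem ω_pow_eq_stdAddChar (d : ℕ) [NeZero d] (k : ℕ) :
    ω d ^ k = stdAddChar (k : ZMod d) := by
  have h := stdAddChar_coe (N := d) k
  push_cast at h
  rw [h, ω, ← Complex.exp_nat_mul]
  ring_nf

theorem pU_apply (d : ℕ) [NeZero d] (m n : ZMod d) (α : ZMod d → ℂ) (k : ZMod d) :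
    pU d m n α k = stdAddChar (n * (k - m)) * α (k - m) := by
  rw [pU, ω_pow_eq_stdAddChar, Nat.cast_mul, natCast_zmod_val, natCast_zmod_val]

theorem val_le_half_or_neg_val_le_half {N : ℕ} [NeZero N] (k : ZMod N) :
    k.val ≤ N / 2 ∨ (-k).val ≤ N / 2 := by
  rcases eq_or_ne k 0 with rfl | hk
  · simp
  · have : NeZero k := ⟨hk⟩
    rw [val_neg_of_ne_zero]
    have := k.val_lt
    omega

theorem two_mul_card_le_card_of_add_notMem {G : Type*} [AddGroup G] [Fintype G] [DecidableEq G]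
    {s : Finset G} {h : G} (hs : ∀ j ∈ s, j + h ∉ s) : 2 * #s ≤ Fintype.card G := by
  have hdisj : Disjoint s (s.map (addRightEmbedding h)) := by
    simp only [disjoint_right, mem_map, addRightEmbedding_apply]
    rintro _ ⟨j, hj, rfl⟩
    exact hs j hj
  calc 2 * #s = #(s ∪ s.map (addRightEmbedding h)) := by
        rw [card_union_of_disjoint hdisj, card_map, two_mul]
    _ ≤ Fintype.card G := card_le_univ _

noncomputable def autocorr {d : ℕ} (α : ZMod d → ℂ) (m : ZMod d) : ZMod d → ℂ :=
  fun j => conj (α (j + m)) * α j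

theorem ip_pU_eq_dft_autocorr (d : ℕ) [NeZero d] (m n : ZMod d) (α : ZMod d → ℂ) :
    ip d α (pU d m n α) = 𝓕 (autocorr α m) (-n) := by
  rw [ip, dft_apply]
  refine (Fintype.sum_equiv (Equiv.addRight m) _ _ fun j => ?_).symm
  simp only [Equiv.coe_addRight, pU_apply, add_sub_cancel_right, autocorr, smul_eq_mul, mul_neg,
    neg_neg, mul_comm j n]
  ring

theorem ip_pU_zero (d : ℕ) [NeZero d] (n : ZMod d) (α : ZMod d → ℂ) :
    ip d α (pU d 0 n α) = ∑ j, conj (α j) * α j * stdAddChar (n * j) := by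
  simp only [ip, pU_apply, sub_zero]
  exact sum_congr rfl fun j _ => by ring

theorem autocorr_add_eq_conj {d : ℕ} (α : ZMod d → ℂ) {H : ZMod d} (hH : H + H = 0) (j : ZMod d) :
    autocorr α H (j + H) = conj (autocorr α H j) := by
  simp only [autocorr, add_assoc, hH, add_zero, map_mul, Complex.conj_conj]
  ring

theorem dft_neg_eq_mul_conj {N : ℕ} [NeZero N] {Φ : ZMod N → ℂ} {H : ZMod N}
    (hΦ : ∀ j, Φ (j + H) = conj (Φ j)) (k : ZMod N) :
    𝓕 Φ (-k) = stdAddChar (H * k) * conj (𝓕 Φ k) := by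
  rw [dft_apply, dft_apply, map_sum, mul_sum]
  refine Fintype.sum_equiv (Equiv.subRight H) _ _ fun j => ?_
  simp only [Equiv.subRight_apply, smul_eq_mul, map_mul, ← AddChar.map_neg_eq_conj, ← hΦ,
    sub_add_cancel, ← mul_assoc, ← AddChar.map_add_eq_mul]
  ring_nf

theorem eq_zero_of_dft_neg_eq_zero {N : ℕ} [NeZero N] {Φ : ZMod N → ℂ} {H : ZMod N}
    (hΦ : ∀ j, Φ (j + H) = conj (Φ j)) (h : ∀ i : ℕ, i ≤ N / 2 → 𝓕 Φ (-(i : ZMod N)) = 0) :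
    Φ = 0 := by
  rw [← LinearEquiv.map_eq_zero_iff dft]
  ext k
  rcases val_le_half_or_neg_val_le_half k with hk | hk
  · have h' := h k.val hk
    rw [natCast_zmod_val] at h'
    simpa [h'] using dft_neg_eq_mul_conj hΦ (-k)
  · simpa using h (-k).val hk

theorem card_support_le_half_of_autocorr_eq_zero {d : ℕ} [NeZero d]
    {α : ZMod d → ℂ} {H : ZMod d} (hα : autocorr α H = 0) : #{j | α j ≠ 0} ≤ d / 2 := by
  have hs : ∀ j ∈ ({j | α j ≠ 0} : Finset (ZMod d)), j + H ∉ ({j | α j ≠ 0} : Finset _) := by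
    intro j hj hjH
    simp only [mem_filter, mem_univ, true_and] at hj hjH
    have := congrFun hα j
    simp_all [autocorr]
  have := two_mul_card_le_card_of_add_notMem hs
  rw [ZMod.card] at this
  omega

theorem sum_mul_eval_eq_zero {ι K : Type*} [Fintype ι] [CommRing K] {x c : ι → K} {n : ℕ}
    (h : ∀ t < n, ∑ j, c j * x j ^ t = 0) {p : K[X]} (hp : p.natDegree < n) :
    ∑ j, c j * p.eval (x j) = 0 := by
  simp_rw [eval_eq_sum_range, mul_sum]
  rw [sum_comm]
  refine sum_eq_zero fun t ht => ?_
  simp_rw [mul_left_comm (c _), ← mul_sum]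
  rw [h t (by rw [mem_range] at ht; omega), mul_zero]

theorem eq_zero_of_sum_mul_pow_eq_zero {ι K : Type*} [Fintype ι] [DecidableEq ι] [Field K]
    {x c : ι → K} (hx : Function.Injective x) {s : Finset ι} {n : ℕ} (hs : #s ≤ n)
    (hcs : ∀ j ∉ s, c j = 0) (h : ∀ t < n, ∑ j, c j * x j ^ t = 0) : c = 0 := by
  funext i
  by_cases hi : i ∈ s
  · have hsum := sum_mul_eval_eq_zero h (p := Lagrange.basis s x i)
      (by rw [Lagrange.natDegree_basis hx.injOn hi]; have := card_pos.mpr ⟨i, hi⟩; omega)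
    rwa [Fintype.sum_eq_single i fun j hj => ?_, Lagrange.eval_basis_self hx.injOn hi,
      mul_one] at hsum
    by_cases hj' : j ∈ s
    · rw [Lagrange.eval_basis_of_ne (Ne.symm hj) hj', mul_zero]
    · rw [hcs j hj', zero_mul]
  · exact hcs i hi

theorem stmt_13_general (d : ℕ) [NeZero d] (heven : Even d)
    (i₀ : ℤ) :
    ¬ ∃ α : ZMod d → ℂ, ip d α α = 1 ∧
      (∀ i : ℕ, i ≤ d / 2 →
        ip d α (pU d ((d / 2 : ℕ) : ZMod d) (i : ZMod d) α) = 0) ∧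
      (∀ i : ℤ, i₀ ≤ i → i ≤ i₀ + ((d / 2 : ℕ) : ℤ) - 1 →
        ip d α (pU d 0 (i : ZMod d) α) = 0) := by
  rintro ⟨α, hnorm, hX, hZ⟩
  set H : ZMod d := ((d / 2 : ℕ) : ZMod d)
  have hH : H + H = 0 := by
    rw [← Nat.cast_add, ← two_mul, Nat.two_mul_div_two_of_even heven, natCast_self]
  have hauto : autocorr α H = 0 :=
    eq_zero_of_dft_neg_eq_zero (autocorr_add_eq_conj α hH) fun i hi => by
      rw [← ip_pU_eq_dft_autocorr]; exact hX i hi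
  set c : ZMod d → ℂ := fun j => conj (α j) * α j * stdAddChar ((i₀ : ZMod d) * j)
  have hc : c = 0 := by
    refine eq_zero_of_sum_mul_pow_eq_zero injective_stdAddChar
      (card_support_le_half_of_autocorr_eq_zero hauto) (fun j hj => ?_) fun t ht => ?_
    · simp_all [c]
    · have := hZ (i₀ + t) (by omega) (by omega)
      rw [ip_pU_zero] at this
      simpa [c, add_mul, AddChar.map_add_eq_mul, ← nsmul_eq_mul, AddChar.map_nsmul_eq_pow,
        mul_assoc] using this
  have hα : α = 0 := funext fun j => by simpa [c, stdAddChar_apply] using congrFun hc j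
  simp [hα, ip] at hnorm

/-- (Lemma 4 of the paper, general window.) For even `d ≥ 4` and an integer
`i₀` with `1 ≤ i₀ ≤ d-2`, there is no unit vector `α ∈ ℂ^d` with
`⟨α, X^{d/2} Z^i α⟩ = 0` for all `i = 0,…,d/2` and `⟨α, Z^i α⟩ = 0` for all
`i₀ ≤ i ≤ i₀ + d/2 - 1`; i.e. any set of GBSs whose difference set contains
`{(d/2,i)}_{i=0}^{d/2} ∪ {(0,i)}_{i=i₀}^{i₀+d/2-1}` is 1-LOCC indistinguishable. -/
theorem stmt_13 (d : ℕ) [NeZero d] (hd : 4 ≤ d) (heven : Even d)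
    (i₀ : ℤ) (hi₀ : 1 ≤ i₀) (hi₀' : i₀ ≤ (d : ℤ) - 2) :
    ¬ ∃ α : ZMod d → ℂ, ip d α α = 1 ∧
      (∀ i : ℕ, i ≤ d / 2 →
        ip d α (pU d ((d / 2 : ℕ) : ZMod d) (i : ZMod d) α) = 0) ∧
      (∀ i : ℤ, i₀ ≤ i → i ≤ i₀ + ((d / 2 : ℕ) : ℤ) - 1 →
        ip d α (pU d 0 (i : ZMod d) α) = 0) :=
  stmt_13_general d heven i₀
end

section
/- Let d ≥ 4 be even. Then there is no unit vector α ∈ ℂ^d such that ⟨α, X^{d/2} Z^i α⟩ = 0 for all i = 0, 1, …, d/2 and ⟨α, Z^i α⟩ = 0 for all integers i with d/2 − ⌈(d+1)/4⌉ + 1 ≤ i ≤ d/2. (Equivalently: any set S of generalized Bell states whose pairwise difference set ΔU contains {(d/2, i)}_{i=0}^{d/2} ∪ {(0, i)}_{i=d/2−⌈(d+1)/4⌉+1}^{d/2} is 1-LOCC indistinguishable.) -/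
open Complex

lemma omega_prim (d : ℕ) [NeZero d] : IsPrimitiveRoot (ω d) d :=
  Complex.isPrimitiveRoot_exp d (NeZero.ne d)

lemma omega_pow_mod (d : ℕ) [NeZero d] (m : ℕ) : ω d ^ m = ω d ^ (m % d) := by
  conv_lhs => rw [← Nat.div_add_mod m d]
  rw [pow_add, pow_mul, (omega_prim d).pow_eq_one, one_pow, one_mul]

lemma omega_ne_zero (d : ℕ) [NeZero d] : ω d ≠ 0 := Complex.exp_ne_zero _

lemma omega_conj (d : ℕ) [NeZero d] : (starRingEnd ℂ) (ω d) = (ω d)⁻¹ := by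
  rw [ω, ← Complex.exp_conj, ← Complex.exp_neg]
  congr 1
  simp only [map_div₀, map_mul, Complex.conj_I, Complex.conj_ofReal, Complex.conj_natCast,
    map_ofNat]
  ring

/-- The character `a ↦ ω^a` on `ZMod d`. -/
noncomputable def χ (d : ℕ) [NeZero d] (a : ZMod d) : ℂ := ω d ^ a.val

lemma χ_ne_zero (d : ℕ) [NeZero d] (a : ZMod d) : χ d a ≠ 0 :=
  pow_ne_zero _ (omega_ne_zero d)

lemma χ_zero (d : ℕ) [NeZero d] : χ d 0 = 1 := by simp [χ, ZMod.val_zero]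

lemma χ_add (d : ℕ) [NeZero d] (a b : ZMod d) : χ d (a + b) = χ d a * χ d b := by
  rw [χ, χ, χ, ← pow_add, ZMod.val_add, ← omega_pow_mod]

lemma χ_mul_pow (d : ℕ) [NeZero d] (a b : ZMod d) : χ d (a * b) = χ d b ^ a.val := by
  rw [χ, χ, ← pow_mul, ZMod.val_mul, ← omega_pow_mod, Nat.mul_comm]

lemma χ_mul_val (d : ℕ) [NeZero d] (a b : ZMod d) :
    χ d (a * b) = ω d ^ (a.val * b.val) := by
  rw [χ, ZMod.val_mul, ← omega_pow_mod]

lemma χ_nat_mul (d : ℕ) [NeZero d] (r : ℕ) (a : ZMod d) :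
    χ d ((r : ZMod d) * a) = χ d a ^ r := by
  induction r with
  | zero => simp [χ_zero]
  | succ n ih =>
    push_cast
    rw [add_mul, one_mul, χ_add, ih, pow_succ]

lemma χ_eq_one_iff (d : ℕ) [NeZero d] (a : ZMod d) : χ d a = 1 ↔ a = 0 := by
  rw [χ, (omega_prim d).pow_eq_one_iff_dvd]
  constructor
  · intro h; exact (ZMod.val_eq_zero a).mp (Nat.eq_zero_of_dvd_of_lt h a.val_lt)
  · rintro rfl; simp [ZMod.val_zero]

lemma χ_neg (d : ℕ) [NeZero d] (a : ZMod d) : χ d (-a) = (χ d a)⁻¹ := by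
  have h : χ d a * χ d (-a) = 1 := by rw [← χ_add]; simp [χ_zero]
  field_simp [χ_ne_zero] at h ⊢
  linear_combination h

lemma χ_injective (d : ℕ) [NeZero d] : Function.Injective (χ d) := by
  intro a b hab
  have h : χ d (a - b) = 1 := by
    rw [sub_eq_add_neg, χ_add, χ_neg, hab, mul_inv_cancel₀ (χ_ne_zero d b)]
  exact sub_eq_zero.mp ((χ_eq_one_iff d _).mp h)

lemma χ_conj (d : ℕ) [NeZero d] (a : ZMod d) :
    (starRingEnd ℂ) (χ d a) = χ d (-a) := by
  rw [χ, map_pow, omega_conj, inv_pow, ← χ, χ_neg]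

lemma χ_pow_d (d : ℕ) [NeZero d] (a : ZMod d) : χ d a ^ d = 1 := by
  rw [χ, ← pow_mul, mul_comm, pow_mul, (omega_prim d).pow_eq_one, one_pow]

lemma zmod_sum_range (d : ℕ) [NeZero d] (f : ZMod d → ℂ) :
    ∑ i : ZMod d, f i = ∑ n ∈ Finset.range d, f (n : ZMod d) := by
  apply Finset.sum_nbij' (fun i : ZMod d => i.val) (fun n : ℕ => (n : ZMod d))
  · intro i _; exact Finset.mem_range.mpr i.val_lt
  · intro n _; exact Finset.mem_univ _
  · intro i _; simp [ZMod.natCast_val, ZMod.cast_id]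
  · intro n hn; exact ZMod.val_natCast_of_lt (Finset.mem_range.mp hn)
  · intro i _; simp [ZMod.natCast_val, ZMod.cast_id]

lemma χ_sum_zero (d : ℕ) [NeZero d] {a : ZMod d} (ha : a ≠ 0) :
    ∑ i : ZMod d, χ d (i * a) = 0 := by
  have hz : χ d a ≠ 1 := fun h => ha ((χ_eq_one_iff d a).mp h)
  calc ∑ i : ZMod d, χ d (i * a) = ∑ i : ZMod d, χ d a ^ i.val :=
        Finset.sum_congr rfl fun i _ => χ_mul_pow d i a
    _ = ∑ n ∈ Finset.range d, χ d a ^ ((n : ZMod d).val) := zmod_sum_range d _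
    _ = ∑ n ∈ Finset.range d, χ d a ^ n := by
        refine Finset.sum_congr rfl fun n hn => ?_
        rw [ZMod.val_natCast_of_lt (Finset.mem_range.mp hn)]
    _ = (χ d a ^ d - 1) / (χ d a - 1) := geom_sum_eq hz d
    _ = 0 := by rw [χ_pow_d]; simp

lemma χ_sum_ite (d : ℕ) [NeZero d] (a : ZMod d) :
    ∑ i : ZMod d, χ d (i * a) = if a = 0 then (d : ℂ) else 0 := by
  split_ifs with h
  · subst h
    simp only [mul_zero, χ_zero, Finset.sum_const, Finset.card_univ, ZMod.card, nsmul_eq_mul,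
      mul_one]
  · exact χ_sum_zero d h

lemma dft_zero (d : ℕ) [NeZero d] (q : ZMod d → ℂ)
    (h : ∀ c : ZMod d, ∑ j : ZMod d, χ d (c * j) * q j = 0) (k : ZMod d) : q k = 0 := by
  have key : ∑ c : ZMod d, χ d (c * (-k)) * ∑ j : ZMod d, χ d (c * j) * q j = (d : ℂ) * q k := by
    calc ∑ c : ZMod d, χ d (c * (-k)) * ∑ j : ZMod d, χ d (c * j) * q j
        = ∑ c : ZMod d, ∑ j : ZMod d, χ d (c * (j - k)) * q j := by
          refine Finset.sum_congr rfl fun c _ => ?_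
          rw [Finset.mul_sum]
          refine Finset.sum_congr rfl fun j _ => ?_
          rw [← mul_assoc, ← χ_add]
          congr 2
          ring
      _ = ∑ j : ZMod d, (∑ c : ZMod d, χ d (c * (j - k))) * q j := by
          rw [Finset.sum_comm]
          exact Finset.sum_congr rfl fun j _ => (Finset.sum_mul _ _ _).symm
      _ = ∑ j : ZMod d, (if j - k = 0 then (d : ℂ) else 0) * q j := by
          refine Finset.sum_congr rfl fun j _ => ?_
          rw [χ_sum_ite]
      _ = ∑ j : ZMod d, (if j = k then (d : ℂ) * q j else 0) := by
          refine Finset.sum_congr rfl fun j _ => ?_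
          by_cases hj : j = k
          · subst hj; simp
          · simp [hj, sub_ne_zero.mpr hj]
      _ = (d : ℂ) * q k := by
          rw [Finset.sum_ite_eq' Finset.univ k fun j => (d : ℂ) * q j]
          simp
  have h0 : ∑ c : ZMod d, χ d (c * (-k)) * ∑ j : ZMod d, χ d (c * j) * q j = 0 :=
    Finset.sum_eq_zero fun c _ => by rw [h c, mul_zero]
  rw [h0] at key
  have hd : (d : ℂ) ≠ 0 := Nat.cast_ne_zero.mpr (NeZero.ne d)
  rcases mul_eq_zero.mp key.symm with h' | h'
  · exact absurd h' hd
  · exact h'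

lemma ceil_eq_aux (d : ℕ) : ⌈((d : ℚ) + 1) / 4⌉₊ = d / 4 + 1 := by
  rw [Nat.ceil_eq_iff (by omega)]
  constructor
  · rw [lt_div_iff₀ (by norm_num : (0:ℚ) < 4)]
    have h : (d / 4 + 1 - 1) * 4 < d + 1 := by omega
    exact_mod_cast h
  · rw [div_le_iff₀ (by norm_num : (0:ℚ) < 4)]
    have h : d + 1 ≤ (d / 4 + 1) * 4 := by omega
    exact_mod_cast h

/-- Fourier transform of the pointwise modulus-squared of `α`. -/
noncomputable def Fdef (d : ℕ) [NeZero d] (α : ZMod d → ℂ) (c : ZMod d) : ℂ :=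
  ∑ j : ZMod d, χ d (c * j) * ((starRingEnd ℂ) (α j) * α j)

/-- Fourier transform of the shifted correlation of `α`. -/
noncomputable def Hdef (d : ℕ) [NeZero d] (α : ZMod d → ℂ) (s' c : ZMod d) : ℂ :=
  ∑ j : ZMod d, χ d (c * j) * ((starRingEnd ℂ) (α (j + s')) * α j)

lemma ipZ_eq (d : ℕ) [NeZero d] (α : ZMod d → ℂ) (c : ZMod d) :
    ip d α (pU d 0 c α) = Fdef d α c := by
  rw [ip, Fdef]
  refine Finset.sum_congr rfl fun k _ => ?_
  simp only [pU, sub_zero]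
  rw [χ_mul_val]
  ring

lemma ipX_eq (d : ℕ) [NeZero d] (α : ZMod d → ℂ) (s' c : ZMod d) :
    ip d α (pU d s' c α) = Hdef d α s' c := by
  rw [ip, Hdef]
  refine Fintype.sum_equiv (Equiv.subRight s') _ _ fun k => ?_
  simp only [Equiv.subRight_apply, pU]
  rw [χ_mul_val, sub_add_cancel]
  ring

lemma Fdef_symm (d : ℕ) [NeZero d] (α : ZMod d → ℂ) (c : ZMod d) :
    Fdef d α (-c) = (starRingEnd ℂ) (Fdef d α c) := by
  rw [Fdef, Fdef, map_sum]
  refine Finset.sum_congr rfl fun j _ => ?_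
  rw [map_mul, χ_conj, map_mul, Complex.conj_conj, neg_mul]
  ring

lemma Hdef_symm (d : ℕ) [NeZero d] (α : ZMod d → ℂ) (s' c : ZMod d)
    (hs'2 : s' + s' = 0) :
    (starRingEnd ℂ) (Hdef d α s' c) = χ d (c * s') * Hdef d α s' (-c) := by
  rw [Hdef, map_sum, Hdef, Finset.mul_sum]
  refine Fintype.sum_equiv (Equiv.addRight s') _ _ fun j => ?_
  simp only [Equiv.coe_addRight]
  rw [map_mul, χ_conj, map_mul, Complex.conj_conj]
  have hrw : α (j + s' + s') = α j := by rw [add_assoc, hs'2, add_zero]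
  rw [hrw]
  have hχ : χ d (c * s') * χ d (-c * (j + s')) = χ d (-(c * j)) := by
    rw [← χ_add]
    congr 1
    ring
  rw [← hχ]
  ring

/-- (Lemma 4 of the paper, symmetric window.) For even `d ≥ 4`, there is no unit
vector `α ∈ ℂ^d` with `⟨α, X^{d/2} Z^i α⟩ = 0` for all `i = 0,…,d/2` and
`⟨α, Z^i α⟩ = 0` for all `d/2 - ⌈(d+1)/4⌉ + 1 ≤ i ≤ d/2`; i.e. any set of GBSs
whose difference set contains
`{(d/2,i)}_{i=0}^{d/2} ∪ {(0,i)}_{i=d/2-⌈(d+1)/4⌉+1}^{d/2}` is 1-LOCC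
indistinguishable. -/
theorem stmt_14 (d : ℕ) [NeZero d] (hd : 4 ≤ d) (heven : Even d) :
    ¬ ∃ α : ZMod d → ℂ, ip d α α = 1 ∧
      (∀ i : ℕ, i ≤ d / 2 →
        ip d α (pU d ((d / 2 : ℕ) : ZMod d) (i : ZMod d) α) = 0) ∧
      (∀ i : ℕ, d / 2 - ⌈((d : ℚ) + 1) / 4⌉₊ + 1 ≤ i → i ≤ d / 2 →
        ip d α (pU d 0 (i : ZMod d) α) = 0) := by
  rintro ⟨α, hnorm, hX, hZ⟩
  have hdmod : d % 2 = 0 := Nat.even_iff.mp heven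
  rw [ceil_eq_aux d] at hZ
  set t : ℕ := d / 4 + 1 with ht
  set s : ℕ := d / 2 with hs
  have hts : t ≤ s := by omega
  have hst : s ≤ 2 * t - 1 := by omega
  set s' : ZMod d := ((s : ℕ) : ZMod d) with hs'
  have hs'2 : s' + s' = 0 := by
    rw [hs', ← Nat.cast_add]
    have h : s + s = d := by omega
    rw [h, ZMod.natCast_self]
  -- F and H vanish at prescribed points
  have hF0 : ∀ i : ℕ, s - t + 1 ≤ i → i ≤ s → Fdef d α ((i : ℕ) : ZMod d) = 0 := by
    intro i h1 h2
    rw [← ipZ_eq]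
    exact hZ i h1 h2
  have hH0 : ∀ i : ℕ, i ≤ s → Hdef d α s' ((i : ℕ) : ZMod d) = 0 := by
    intro i h1
    rw [← ipX_eq]
    exact hX i h1
  have hHsymm : ∀ c : ZMod d, Hdef d α s' c = 0 → Hdef d α s' (-c) = 0 := by
    intro c hc
    have key := Hdef_symm d α s' c hs'2
    rw [hc, map_zero] at key
    rcases mul_eq_zero.mp key.symm with h' | h'
    · exact absurd h' (χ_ne_zero d _)
    · exact h'
  -- H vanishes everywhere
  have hHall : ∀ c : ZMod d, Hdef d α s' c = 0 := by
    intro c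
    have hcv : ((c.val : ℕ) : ZMod d) = c := by simp [ZMod.natCast_val, ZMod.cast_id]
    by_cases h : c.val ≤ s
    · rw [← hcv]; exact hH0 c.val h
    · have hlt := c.val_lt
      have h1 : d - c.val ≤ s := by omega
      have h2 : (((d - c.val : ℕ) : ZMod d)) = -c := by
        have h3 : ((d - c.val : ℕ) : ZMod d) + ((c.val : ℕ) : ZMod d) = ((d : ℕ) : ZMod d) := by
          rw [← Nat.cast_add]
          congr 1
          omega
        rw [ZMod.natCast_self, hcv] at h3
        linear_combination h3
      have h4 := hHsymm _ (h2 ▸ hH0 (d - c.val) h1)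
      rwa [neg_neg] at h4
  -- hence q = 0 identically
  have hq0 : ∀ j : ZMod d, (starRingEnd ℂ) (α (j + s')) * α j = 0 := by
    intro j
    exact dft_zero d (fun j => (starRingEnd ℂ) (α (j + s')) * α j)
      (fun c => by have := hHall c; rwa [Hdef] at this) j
  -- support of α
  set A : Finset (ZMod d) := Finset.univ.filter (fun j => α j ≠ 0) with hA
  have hshift : ∀ j ∈ A, j + s' ∉ A := by
    intro j hj
    have hαj : α j ≠ 0 := (Finset.mem_filter.mp hj).2
    rcases mul_eq_zero.mp (hq0 j) with h' | h'
    · intro hmem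
      exact (Finset.mem_filter.mp hmem).2 (by simpa using h')
    · exact absurd h' hαj
  have hcardA : A.card ≤ s := by
    have hinj : Function.Injective (fun j : ZMod d => j + s') := add_left_injective s'
    have himg : A.image (fun j => j + s') ⊆ Aᶜ := by
      intro x hx
      rcases Finset.mem_image.mp hx with ⟨j, hj, rfl⟩
      exact Finset.mem_compl.mpr (hshift j hj)
    have h1 : A.card ≤ Aᶜ.card := by
      rw [← Finset.card_image_of_injective A hinj]
      exact Finset.card_le_card himg
    have h2 : Aᶜ.card = d - A.card := by
      rw [Finset.card_compl]
      congr 1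
      simp [ZMod.card]
    omega
  -- Vandermonde argument: α vanishes everywhere
  have hallzero : ∀ j : ZMod d, α j = 0 := by
    set k : ℕ := A.card with hk
    set e : Fin k ≃ A := A.equivFin.symm with he
    set c0 : ZMod d := ((s - t + 1 : ℕ) : ZMod d) with hc0
    -- F vanishes at c0 + r for r < k
    have hFwin : ∀ r : ℕ, r < k → Fdef d α (c0 + ((r : ℕ) : ZMod d)) = 0 := by
      intro r hr
      have hrs : r < s := lt_of_lt_of_le hr hcardA
      have hcast : c0 + ((r : ℕ) : ZMod d) = (((s - t + 1 + r : ℕ)) : ZMod d) := by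
        rw [hc0, ← Nat.cast_add]
      rw [hcast]
      by_cases hcase : s - t + 1 + r ≤ s
      · exact hF0 _ (by omega) hcase
      · set i' : ℕ := s + t - 1 - r with hi'
        have hb1 : s - t + 1 ≤ i' := by omega
        have hb2 : i' ≤ s := by omega
        have hsum : i' + (s - t + 1 + r) = d := by omega
        have hneg : (((s - t + 1 + r : ℕ)) : ZMod d) = -((i' : ℕ) : ZMod d) := by
          have h3 : ((i' : ℕ) : ZMod d) + (((s - t + 1 + r : ℕ)) : ZMod d) = 0 := by
            rw [← Nat.cast_add, hsum, ZMod.natCast_self]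
          linear_combination h3
        rw [hneg, Fdef_symm, hF0 i' hb1 hb2, map_zero]
    -- apply the Vandermonde lemma
    set x : Fin k → ℂ := fun r => χ d ((e r : ZMod d)) with hx
    set v : Fin k → ℂ := fun r =>
      χ d (c0 * (e r : ZMod d)) * ((starRingEnd ℂ) (α (e r : ZMod d)) * α (e r : ZMod d))
      with hv
    have hxinj : Function.Injective x := by
      intro a b hab
      have h1 : ((e a : ZMod d)) = ((e b : ZMod d)) := χ_injective d hab
      exact e.injective (Subtype.ext h1)
    have hsumv : ∀ r : Fin k, ∑ j : Fin k, v j * x j ^ (r : ℕ) = 0 := by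
      intro r
      have hFval := hFwin r r.isLt
      rw [Fdef] at hFval
      have hres : ∑ j : ZMod d, χ d ((c0 + (((r : ℕ) : ℕ) : ZMod d)) * j) *
            ((starRingEnd ℂ) (α j) * α j) =
          ∑ j ∈ A, χ d ((c0 + (((r : ℕ) : ℕ) : ZMod d)) * j) *
            ((starRingEnd ℂ) (α j) * α j) := by
        symm
        apply Finset.sum_subset (Finset.subset_univ A)
        intro j _ hj
        have hz : α j = 0 := by
          by_contra hne
          exact hj (Finset.mem_filter.mpr ⟨Finset.mem_univ j, hne⟩)
        simp [hz]
      rw [hres] at hFval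
      rw [← hFval]
      rw [← Finset.sum_coe_sort A (fun j => χ d ((c0 + (((r : ℕ) : ℕ) : ZMod d)) * j) *
        ((starRingEnd ℂ) (α j) * α j))]
      refine Fintype.sum_equiv e _ _ fun j => ?_
      have hsplit : χ d ((c0 + (((r : ℕ) : ℕ) : ZMod d)) * (e j : ZMod d)) =
          χ d (c0 * (e j : ZMod d)) * χ d ((e j : ZMod d)) ^ ((r : ℕ) : ℕ) := by
        rw [add_mul, χ_add, χ_nat_mul d ((r : ℕ) : ℕ) ((e j : ZMod d))]
      rw [hv, hx, hsplit]
      ring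
    have hv0 : v = 0 :=
      Matrix.eq_zero_of_forall_pow_sum_mul_pow_eq_zero hxinj (fun r => hsumv r)
    -- conclude
    intro j
    by_contra hne
    have hjA : j ∈ A := Finset.mem_filter.mpr ⟨Finset.mem_univ j, hne⟩
    have hr := congrFun hv0 (e.symm ⟨j, hjA⟩)
    rw [hv] at hr
    simp only [e.apply_symm_apply, Pi.zero_apply] at hr
    rcases mul_eq_zero.mp hr with h' | h'
    · exact absurd h' (χ_ne_zero d _)
    · rcases mul_eq_zero.mp h' with h'' | h''
      · exact hne (by simpa using h'')
      · exact hne h''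
  -- contradiction with unit norm
  rw [ip] at hnorm
  have hzero : (0 : ℂ) = 1 := by
    rw [← hnorm]
    symm
    refine Finset.sum_eq_zero fun j _ => ?_
    rw [hallzero j]
    simp
  exact zero_ne_one hzero
end
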